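/- Improvement from the plug-in step size (credit-reset case). Let π and π' be policies of a finite-horizon MDP with rewards bounded in [0, R_max] and τ > 0 with p_π > 0. Suppose π'_h(·|x) = π_h(·|x) for every h and every x ∉ G_{h,τ}, and that E_{y~π'_h(·|x)}[A_h^π(x,y)] ≥ 0 for every h and every x ∈ G_{h,τ}. Let Â be a real number with 0 ≤ Â ≤ 2·H²·R_max, and set α̂ = Â/(2·H²·R_max) ∈ [0,1]. Then the mixture policy π_α̂ = (1−α̂)π + α̂π' satisfies J(π_α̂) − J(π) ≥ p_π·Â·(2·𝔸^G_{π,μ}(π') − Â)/(4·H·R_max). -/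
import Mathlib


open Finset MeasureTheory

attribute [local instance] Classical.propDecidable

/-- A finite-horizon MDP with finite state space `X`, finite action space `Y`,
horizon `H ≥ 1`, initial distribution `μ`, transition kernels `P` and rewards `r`
(used for time steps `h ∈ {1, …, H}`). -/
structure MDP (X Y : Type*) [Fintype X] [Fintype Y] where
  H : ℕ
  H_pos : 1 ≤ H
  μ : X → ℝ
  μ_nonneg : ∀ x, 0 ≤ μ x
  μ_sum_one : ∑ x, μ x = 1
  P : ℕ → X → Y → X → ℝ
  P_nonneg : ∀ h x y x', 0 ≤ P h x y x'
  P_sum_one : ∀ h x y, ∑ x', P h x y x' = 1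
  r : ℕ → X → Y → ℝ

variable {X Y : Type*} [Fintype X] [Fintype Y]

/-- A policy assigns to each time step and state a probability distribution over actions. -/
def IsPolicy (M : MDP X Y) (π : ℕ → X → Y → ℝ) : Prop :=
  (∀ h x y, 0 ≤ π h x y) ∧ ∀ h x, ∑ y, π h x y = 1

/-- Value function `V_h^π(x)`, defined by backwards recursion with `V_{H+1}^π ≡ 0`. -/
noncomputable def Vval (M : MDP X Y) (π : ℕ → X → Y → ℝ) (h : ℕ) (x : X) : ℝ :=
  if hh : M.H < h then 0
  else ∑ y, π h x y * (M.r h x y + ∑ x', M.P h x y x' * Vval M π (h + 1) x')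
termination_by M.H + 1 - h
decreasing_by omega

/-- Action-value function `Q_h^π(x,y)`. -/
noncomputable def Qval (M : MDP X Y) (π : ℕ → X → Y → ℝ) (h : ℕ) (x : X) (y : Y) : ℝ :=
  M.r h x y + ∑ x', M.P h x y x' * Vval M π (h + 1) x'

/-- Advantage function `A_h^π(x,y) = Q_h^π(x,y) − V_h^π(x)`. -/
noncomputable def Aval (M : MDP X Y) (π : ℕ → X → Y → ℝ) (h : ℕ) (x : X) (y : Y) : ℝ :=
  Qval M π h x y - Vval M π h x

/-- Time-`h` state distribution `d_π^h` (for `h ∈ {1, …, H}`), with `d_π^1 = μ`. -/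
noncomputable def dState (M : MDP X Y) (π : ℕ → X → Y → ℝ) : ℕ → X → ℝ
  | 0 => M.μ
  | 1 => M.μ
  | (h + 2) => fun x' => ∑ x, ∑ y, dState M π (h + 1) x * π (h + 1) x y * M.P (h + 1) x y x'

/-- Expected return `J(π)`. -/
noncomputable def J (M : MDP X Y) (π : ℕ → X → Y → ℝ) : ℝ :=
  ∑ x, M.μ x * Vval M π 1 x

/-- Policy advantage `𝔸_{π,μ}(π') = (1/H) Σ_h E_{x~d_π^h} E_{y~π'_h(·|x)}[A_h^π(x,y)]`. -/
noncomputable def polAdv (M : MDP X Y) (π π' : ℕ → X → Y → ℝ) : ℝ :=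
  ((M.H : ℝ))⁻¹ * ∑ h ∈ Icc 1 M.H, ∑ x, dState M π h x * ∑ y, π' h x y * Aval M π h x y

/-- The `τ`-improvable set at time `h`: states where `max_y A_h^π(x,y) ≥ τ`. -/
noncomputable def Gset (M : MDP X Y) (π : ℕ → X → Y → ℝ) (τ : ℝ) (h : ℕ) : Set X :=
  {x | τ ≤ ⨆ y, Aval M π h x y}

/-- `p_{π,h}`: probability of the `τ`-improvable set at time `h` under `d_π^h`. -/
noncomputable def pGh (M : MDP X Y) (π : ℕ → X → Y → ℝ) (τ : ℝ) (h : ℕ) : ℝ :=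
  ∑ x, if x ∈ Gset M π τ h then dState M π h x else 0

/-- Coverage `p_π = (1/H) Σ_h p_{π,h}`. -/
noncomputable def coverage (M : MDP X Y) (π : ℕ → X → Y → ℝ) (τ : ℝ) : ℝ :=
  ((M.H : ℝ))⁻¹ * ∑ h ∈ Icc 1 M.H, pGh M π τ h

/-- Conditional policy advantage on the improvable set,
`𝔸^G_{π,μ}(π') = E[A_h^π(x,y) | x ∈ G_{h,τ}]` with `h ~ Unif{1,…,H}`, `x ~ d_π^h`,
`y ~ π'_h(·|x)`. -/
noncomputable def condAdvG (M : MDP X Y) (π π' : ℕ → X → Y → ℝ) (τ : ℝ) : ℝ :=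
  (((M.H : ℝ))⁻¹ * ∑ h ∈ Icc 1 M.H, ∑ x,
      if x ∈ Gset M π τ h then dState M π h x * ∑ y, π' h x y * Aval M π h x y else 0)
    / coverage M π τ

/-- Conditional policy advantage off the improvable set,
`𝔸^{Gc}_{π,μ}(π') = E[A_h^π(x,y) | x ∉ G_{h,τ}]`. -/
noncomputable def condAdvGc (M : MDP X Y) (π π' : ℕ → X → Y → ℝ) (τ : ℝ) : ℝ :=
  (((M.H : ℝ))⁻¹ * ∑ h ∈ Icc 1 M.H, ∑ x,
      if x ∉ Gset M π τ h then dState M π h x * ∑ y, π' h x y * Aval M π h x y else 0)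
    / (1 - coverage M π τ)

/-- Total-variation distance between two (finitely supported) distributions. -/
noncomputable def tvDist (p q : X → ℝ) : ℝ := (1 / 2) * ∑ x, |p x - q x|

/-- The statewise mixture policy `π_α = (1−α)π + απ'`. -/
def mix (α : ℝ) (π π' : ℕ → X → Y → ℝ) : ℕ → X → Y → ℝ :=
  fun h x y => (1 - α) * π h x y + α * π' h x y

/-- `ε_CPI = max_{h ∈ {1,…,H}, x} |E_{y~π'_h(·|x)}[A_h^π(x,y)]|`. -/
noncomputable def epsCPI (M : MDP X Y) (π π' : ℕ → X → Y → ℝ) : ℝ :=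
  ⨆ h : (Icc 1 M.H : Finset ℕ), ⨆ x : X, |∑ y, π' h.1 x y * Aval M π h.1 x y|

private lemma Vval_congr (M : MDP X Y) (π ρ : ℕ → X → Y → ℝ)
    (hpr : ∀ h x y, π h x y = ρ h x y) (h : ℕ) (x : X) :
    Vval M π h x = Vval M ρ h x := by
  conv_lhs => rw [Vval]
  conv_rhs => rw [Vval]
  split
  · rfl
  · refine Finset.sum_congr rfl fun y _ => ?_
    rw [hpr]
    have hrec : ∑ x', M.P h x y x' * Vval M π (h+1) x'
        = ∑ x', M.P h x y x' * Vval M ρ (h+1) x' :=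
      Finset.sum_congr rfl fun x' _ => by rw [Vval_congr M π ρ hpr (h+1) x']
    rw [hrec]
termination_by M.H + 1 - h
decreasing_by omega

private lemma Vval_nonneg (M : MDP X Y) (π : ℕ → X → Y → ℝ) (hπ : IsPolicy M π)
    (hr0 : ∀ h ∈ Icc 1 M.H, ∀ x y, 0 ≤ M.r h x y) (h : ℕ) (hh : 1 ≤ h) (x : X) :
    0 ≤ Vval M π h x := by
  rw [Vval]
  split
  · exact le_refl 0
  · next hle =>
    refine Finset.sum_nonneg fun y _ => mul_nonneg (hπ.1 _ _ _) (add_nonneg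
      (hr0 h (by simp only [Finset.mem_Icc]; omega) x y)
      (Finset.sum_nonneg fun x' _ => mul_nonneg (M.P_nonneg _ _ _ _)
        (Vval_nonneg M π hπ hr0 (h+1) (by omega) x')))
termination_by M.H + 1 - h
decreasing_by omega

private lemma Vval_le (M : MDP X Y) (π : ℕ → X → Y → ℝ) (hπ : IsPolicy M π)
    (Rmax : ℝ) (hR : 0 ≤ Rmax) (hr : ∀ h ∈ Icc 1 M.H, ∀ x y, M.r h x y ≤ Rmax)
    (h : ℕ) (hh : 1 ≤ h) (x : X) :
    Vval M π h x ≤ ((M.H + 1 - h : ℕ) : ℝ) * Rmax := by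
  rw [Vval]
  split
  · next hlt =>
    have hzero : M.H + 1 - h = 0 := by omega
    rw [hzero]; simp
  · next hle =>
    have hhH : h ≤ M.H := by omega
    have hinner : ∀ y, ∑ x', M.P h x y x' * Vval M π (h+1) x'
        ≤ ((M.H - h : ℕ) : ℝ) * Rmax := by
      intro y
      calc ∑ x', M.P h x y x' * Vval M π (h+1) x'
          ≤ ∑ x', M.P h x y x' * (((M.H + 1 - (h+1) : ℕ) : ℝ) * Rmax) :=
            Finset.sum_le_sum fun x' _ => mul_le_mul_of_nonneg_left
              (Vval_le M π hπ Rmax hR hr (h+1) (by omega) x') (M.P_nonneg _ _ _ _)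
        _ = ((M.H + 1 - (h+1) : ℕ) : ℝ) * Rmax := by
            rw [← Finset.sum_mul, M.P_sum_one, one_mul]
        _ = ((M.H - h : ℕ) : ℝ) * Rmax := by
            congr 2
            omega
    calc ∑ y, π h x y * (M.r h x y + ∑ x', M.P h x y x' * Vval M π (h+1) x')
        ≤ ∑ y, π h x y * (Rmax + ((M.H - h : ℕ) : ℝ) * Rmax) :=
          Finset.sum_le_sum fun y _ => mul_le_mul_of_nonneg_left
            (add_le_add (hr h (by simp only [Finset.mem_Icc]; omega) x y) (hinner y))
            (hπ.1 _ _ _)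
      _ = Rmax + ((M.H - h : ℕ) : ℝ) * Rmax := by
          rw [← Finset.sum_mul, hπ.2, one_mul]
      _ = ((M.H + 1 - h : ℕ) : ℝ) * Rmax := by
          have : M.H + 1 - h = (M.H - h) + 1 := by omega
          rw [this]
          push_cast
          ring
termination_by M.H + 1 - h
decreasing_by omega

private lemma Aval_le (M : MDP X Y) (π : ℕ → X → Y → ℝ) (hπ : IsPolicy M π)
    (Rmax : ℝ) (hR : 0 ≤ Rmax) (hr : ∀ h ∈ Icc 1 M.H, ∀ x y, M.r h x y ∈ Set.Icc 0 Rmax)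
    (h : ℕ) (hh1 : 1 ≤ h) (hh2 : h ≤ M.H) (x : X) (y : Y) :
    Aval M π h x y ≤ (M.H : ℝ) * Rmax := by
  have hr1 : ∀ h ∈ Icc 1 M.H, ∀ x y, M.r h x y ≤ Rmax := fun h hh x y => (hr h hh x y).2
  have hr0 : ∀ h ∈ Icc 1 M.H, ∀ x y, 0 ≤ M.r h x y := fun h hh x y => (hr h hh x y).1
  have hV : 0 ≤ Vval M π h x := Vval_nonneg M π hπ hr0 h hh1 x
  have hQ : Qval M π h x y ≤ (M.H : ℝ) * Rmax := by
    have hinner : ∑ x', M.P h x y x' * Vval M π (h+1) x'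
        ≤ ((M.H + 1 - (h+1) : ℕ) : ℝ) * Rmax := by
      calc ∑ x', M.P h x y x' * Vval M π (h+1) x'
          ≤ ∑ x', M.P h x y x' * (((M.H + 1 - (h+1) : ℕ) : ℝ) * Rmax) :=
            Finset.sum_le_sum fun x' _ => mul_le_mul_of_nonneg_left
              (Vval_le M π hπ Rmax hR hr1 (h+1) (by omega) x') (M.P_nonneg _ _ _ _)
        _ = _ := by rw [← Finset.sum_mul, M.P_sum_one, one_mul]
    have hrb := hr1 h (by simp only [Finset.mem_Icc]; omega) x y
    have hcast : ((M.H + 1 - (h+1) : ℕ) : ℝ) + 1 ≤ (M.H : ℝ) := by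
      have : (M.H + 1 - (h+1)) + 1 ≤ M.H := by omega
      exact_mod_cast this
    have : ((M.H + 1 - (h+1) : ℕ) : ℝ) * Rmax + Rmax ≤ (M.H : ℝ) * Rmax := by
      nlinarith
    calc Qval M π h x y = M.r h x y + ∑ x', M.P h x y x' * Vval M π (h+1) x' := rfl
      _ ≤ Rmax + ((M.H + 1 - (h+1) : ℕ) : ℝ) * Rmax := add_le_add hrb hinner
      _ ≤ (M.H : ℝ) * Rmax := by linarith
  calc Aval M π h x y = Qval M π h x y - Vval M π h x := rfl
    _ ≤ Qval M π h x y := by linarith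
    _ ≤ (M.H : ℝ) * Rmax := hQ

private lemma sum_pi_A (M : MDP X Y) (π : ℕ → X → Y → ℝ) (hπ : IsPolicy M π)
    (h : ℕ) (hh2 : h ≤ M.H) (x : X) :
    ∑ y, π h x y * Aval M π h x y = 0 := by
  have hv : Vval M π h x = ∑ y, π h x y * Qval M π h x y := by
    conv_lhs => rw [Vval]
    rw [dif_neg (by omega)]
    rfl
  simp only [Aval, mul_sub]
  rw [Finset.sum_sub_distrib, ← Finset.sum_mul, hπ.2, one_mul, ← hv, sub_self]

private lemma dState_nonneg (M : MDP X Y) (π : ℕ → X → Y → ℝ) (hπ : IsPolicy M π)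
    (h : ℕ) (x : X) : 0 ≤ dState M π h x := by
  match h with
  | 0 => exact M.μ_nonneg x
  | 1 => exact M.μ_nonneg x
  | (k+2) =>
    exact Finset.sum_nonneg fun z _ => Finset.sum_nonneg fun y _ =>
      mul_nonneg (mul_nonneg (dState_nonneg M π hπ (k+1) z) (hπ.1 _ _ _))
        (M.P_nonneg _ _ _ _)

private lemma dState_succ (M : MDP X Y) (π : ℕ → X → Y → ℝ) (h : ℕ) (hh : 1 ≤ h) (x' : X) :
    dState M π (h+1) x' = ∑ x, ∑ y, dState M π h x * π h x y * M.P h x y x' := by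
  obtain ⟨k, rfl⟩ : ∃ k, h = k + 1 := ⟨h - 1, by omega⟩
  rfl
private lemma pdl (M : MDP X Y) (π ρ : ℕ → X → Y → ℝ) (hπ : IsPolicy M π)
    (hρ : IsPolicy M ρ) :
    J M ρ - J M π
      = ∑ h ∈ Icc 1 M.H, ∑ x, dState M ρ h x * ∑ y, ρ h x y * Aval M π h x y := by
  set T : ℕ → ℝ := fun h => ∑ x, dState M ρ h x * (Vval M ρ h x - Vval M π h x) with hT
  have hstep : ∀ h, 1 ≤ h → h ≤ M.H →
      T h = (∑ x, dState M ρ h x * ∑ y, ρ h x y * Aval M π h x y) + T (h+1) := by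
    intro h h1 h2
    have hW : ∀ x, Vval M ρ h x - Vval M π h x
        = (∑ y, ρ h x y * ∑ x', M.P h x y x' * (Vval M ρ (h+1) x' - Vval M π (h+1) x'))
          + ∑ y, ρ h x y * Aval M π h x y := by
      intro x
      have hvρ : Vval M ρ h x
          = ∑ y, ρ h x y * (M.r h x y + ∑ x', M.P h x y x' * Vval M ρ (h+1) x') := by
        conv_lhs => rw [Vval]
        rw [dif_neg (by omega)]
      have hA : ∑ y, ρ h x y * Aval M π h x y
          = (∑ y, ρ h x y * (M.r h x y + ∑ x', M.P h x y x' * Vval M π (h+1) x'))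
            - Vval M π h x := by
        simp only [Aval, Qval, mul_sub]
        rw [Finset.sum_sub_distrib, ← Finset.sum_mul, hρ.2, one_mul]
      rw [hvρ, hA]
      have hper : ∀ y ∈ (univ : Finset Y),
          ρ h x y * (M.r h x y + ∑ x', M.P h x y x' * Vval M ρ (h+1) x')
          = ρ h x y * ∑ x', M.P h x y x' * (Vval M ρ (h+1) x' - Vval M π (h+1) x')
            + ρ h x y * (M.r h x y + ∑ x', M.P h x y x' * Vval M π (h+1) x') := by
        intro y _
        have hsub : ∑ x', M.P h x y x' * (Vval M ρ (h+1) x' - Vval M π (h+1) x')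
            = (∑ x', M.P h x y x' * Vval M ρ (h+1) x')
              - ∑ x', M.P h x y x' * Vval M π (h+1) x' := by
          rw [← Finset.sum_sub_distrib]
          exact Finset.sum_congr rfl fun x' _ => by ring
        rw [hsub]; ring
      rw [Finset.sum_congr rfl hper, Finset.sum_add_distrib]
      ring
    have hd : ∀ x', dState M ρ (h+1) x'
        = ∑ x, ∑ y, dState M ρ h x * ρ h x y * M.P h x y x' :=
      fun x' => dState_succ M ρ h h1 x'
    have hT2 : (∑ x, dState M ρ h x * ∑ y, ρ h x y *
          ∑ x', M.P h x y x' * (Vval M ρ (h+1) x' - Vval M π (h+1) x')) = T (h+1) := by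
      have e1 : (∑ x, dState M ρ h x * ∑ y, ρ h x y *
            ∑ x', M.P h x y x' * (Vval M ρ (h+1) x' - Vval M π (h+1) x'))
          = ∑ x, ∑ y, ∑ x', dState M ρ h x * ρ h x y * M.P h x y x'
              * (Vval M ρ (h+1) x' - Vval M π (h+1) x') := by
        simp only [Finset.mul_sum]
        exact Finset.sum_congr rfl fun x _ => Finset.sum_congr rfl fun y _ =>
          Finset.sum_congr rfl fun x' _ => by ring
      have e2 : (∑ x, ∑ y, ∑ x', dState M ρ h x * ρ h x y * M.P h x y x'
              * (Vval M ρ (h+1) x' - Vval M π (h+1) x'))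
          = ∑ x', ∑ x, ∑ y, dState M ρ h x * ρ h x y * M.P h x y x'
              * (Vval M ρ (h+1) x' - Vval M π (h+1) x') := by
        calc (∑ x, ∑ y, ∑ x', dState M ρ h x * ρ h x y * M.P h x y x'
              * (Vval M ρ (h+1) x' - Vval M π (h+1) x'))
            = ∑ x, ∑ x', ∑ y, dState M ρ h x * ρ h x y * M.P h x y x'
              * (Vval M ρ (h+1) x' - Vval M π (h+1) x') :=
              Finset.sum_congr rfl fun x _ => Finset.sum_comm
          _ = ∑ x', ∑ x, ∑ y, dState M ρ h x * ρ h x y * M.P h x y x'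
              * (Vval M ρ (h+1) x' - Vval M π (h+1) x') := Finset.sum_comm
      have e3 : (∑ x', ∑ x, ∑ y, dState M ρ h x * ρ h x y * M.P h x y x'
              * (Vval M ρ (h+1) x' - Vval M π (h+1) x'))
          = ∑ x', dState M ρ (h+1) x' * (Vval M ρ (h+1) x' - Vval M π (h+1) x') := by
        refine Finset.sum_congr rfl fun x' _ => ?_
        rw [hd x', Finset.sum_mul]
        exact Finset.sum_congr rfl fun x _ => by rw [Finset.sum_mul]
      rw [e1, e2, e3]
    calc T h = ∑ x, dState M ρ h x * (Vval M ρ h x - Vval M π h x) := rfl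
      _ = (∑ x, dState M ρ h x * ∑ y, ρ h x y *
            ∑ x', M.P h x y x' * (Vval M ρ (h+1) x' - Vval M π (h+1) x'))
          + ∑ x, dState M ρ h x * ∑ y, ρ h x y * Aval M π h x y := by
          rw [← Finset.sum_add_distrib]
          exact Finset.sum_congr rfl fun x _ => by rw [hW x]; ring
      _ = (∑ x, dState M ρ h x * ∑ y, ρ h x y * Aval M π h x y) + T (h+1) := by
          rw [hT2]; ring
  have hz : ∀ (σ : ℕ → X → Y → ℝ) x, Vval M σ (M.H+1) x = 0 := fun σ x => by
    rw [Vval]; rw [dif_pos (by omega)]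
  have hTend : T (M.H + 1) = 0 := by
    simp only [hT, hz, sub_zero, mul_zero, Finset.sum_const_zero]
  have hT1J : T 1 = J M ρ - J M π := by
    simp only [hT, J, mul_sub]
    rw [Finset.sum_sub_distrib]
    rfl
  have htel : ∑ i ∈ Finset.range M.H, (T (i+1) - T (i+1+1)) = T 1 - T (M.H+1) :=
    Finset.sum_range_sub' (fun i => T (i+1)) M.H
  have hmain : J M ρ - J M π
      = ∑ i ∈ Finset.range M.H, ∑ x, dState M ρ (i+1) x
          * ∑ y, ρ (i+1) x y * Aval M π (i+1) x y := by
    rw [← hT1J]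
    rw [show T 1 = T 1 - T (M.H+1) from by rw [hTend, sub_zero], ← htel]
    refine Finset.sum_congr rfl fun i hi => ?_
    have hiH := Finset.mem_range.mp hi
    have := hstep (i+1) (by omega) (by omega)
    linarith
  rw [hmain, ← Finset.Ico_add_one_right_eq_Icc, Finset.sum_Ico_eq_sum_range]
  try simp only [Nat.add_sub_cancel]
  exact Finset.sum_congr rfl fun i _ => by rw [Nat.add_comm 1 i]
private lemma mix_isPolicy (M : MDP X Y) (π π' : ℕ → X → Y → ℝ)
    (hπ : IsPolicy M π) (hπ' : IsPolicy M π') (α : ℝ) (hα0 : 0 ≤ α) (hα1 : α ≤ 1) :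
    IsPolicy M (mix α π π') := by
  constructor
  · intro h x y
    exact add_nonneg (mul_nonneg (by linarith) (hπ.1 h x y)) (mul_nonneg hα0 (hπ'.1 h x y))
  · intro h x
    simp only [mix]
    rw [Finset.sum_add_distrib, ← Finset.mul_sum, ← Finset.mul_sum, hπ.2, hπ'.2]
    ring

private lemma sum_mix_A (M : MDP X Y) (π π' : ℕ → X → Y → ℝ) (hπ : IsPolicy M π)
    (α : ℝ) (h : ℕ) (hh2 : h ≤ M.H) (x : X) :
    ∑ y, mix α π π' h x y * Aval M π h x y = α * ∑ y, π' h x y * Aval M π h x y := by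
  simp only [mix, add_mul]
  rw [Finset.sum_add_distrib]
  have e1 : ∑ y, (1 - α) * π h x y * Aval M π h x y
      = (1 - α) * ∑ y, π h x y * Aval M π h x y := by
    rw [Finset.mul_sum]
    exact Finset.sum_congr rfl fun y _ => by ring
  have e2 : ∑ y, α * π' h x y * Aval M π h x y
      = α * ∑ y, π' h x y * Aval M π h x y := by
    rw [Finset.mul_sum]
    exact Finset.sum_congr rfl fun y _ => by ring
  rw [e1, e2, sum_pi_A M π hπ h hh2 x, mul_zero, zero_add]

private lemma dState_mix_ge (M : MDP X Y) (π π' : ℕ → X → Y → ℝ)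
    (hπ : IsPolicy M π) (hπ' : IsPolicy M π') (α : ℝ) (hα0 : 0 ≤ α) (hα1 : α ≤ 1)
    (h : ℕ) (x : X) :
    (1 - α) ^ (h - 1) * dState M π h x ≤ dState M (mix α π π') h x := by
  match h with
  | 0 => simp [dState]
  | 1 => simp [dState]
  | (k+2) =>
    have hmp : IsPolicy M (mix α π π') := mix_isPolicy M π π' hπ hπ' α hα0 hα1
    have hrec : ∀ z, (1 - α) ^ k * dState M π (k+1) z ≤ dState M (mix α π π') (k+1) z := by
      intro z
      have := dState_mix_ge M π π' hπ hπ' α hα0 hα1 (k+1) z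
      simpa using this
    show (1 - α) ^ (k + 1) * (∑ z, ∑ y, dState M π (k+1) z * π (k+1) z y * M.P (k+1) z y x)
        ≤ ∑ z, ∑ y, dState M (mix α π π') (k+1) z * mix α π π' (k+1) z y * M.P (k+1) z y x
    rw [Finset.mul_sum]
    refine Finset.sum_le_sum fun z _ => ?_
    rw [Finset.mul_sum]
    refine Finset.sum_le_sum fun y _ => ?_
    have h1 : (1 - α) ^ (k + 1) * (dState M π (k+1) z * π (k+1) z y * M.P (k+1) z y x)
        = ((1 - α) ^ k * dState M π (k+1) z) * ((1 - α) * π (k+1) z y) * M.P (k+1) z y x := by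
      ring
    rw [h1]
    have hd0 : 0 ≤ (1 - α) ^ k * dState M π (k+1) z :=
      mul_nonneg (pow_nonneg (by linarith) k) (dState_nonneg M π hπ (k+1) z)
    have hpi0 : 0 ≤ (1 - α) * π (k+1) z y := mul_nonneg (by linarith) (hπ.1 _ _ _)
    have hle2 : (1 - α) * π (k+1) z y ≤ mix α π π' (k+1) z y := by
      have : 0 ≤ α * π' (k+1) z y := mul_nonneg hα0 (hπ'.1 _ _ _)
      simp only [mix]; linarith
    exact mul_le_mul_of_nonneg_right
      (mul_le_mul (hrec z) hle2 hpi0 (le_trans hd0 (hrec z))) (M.P_nonneg _ _ _ _)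
/-- **Improvement from the plug-in step size (credit-reset case).**
If `π'` agrees with `π` off the improvable sets and has nonnegative expected
advantage on them, rewards lie in `[0, R_max]`, `0 ≤ Â ≤ 2·H²·R_max` and
`α̂ = Â/(2·H²·R_max)`, then
`J(π_α̂) − J(π) ≥ p_π·Â·(2·𝔸^G_{π,μ}(π') − Â)/(4·H·R_max)`. -/
theorem plugin_step_size_credit
    {X Y : Type*} [Fintype X] [Fintype Y] [Nonempty X] [Nonempty Y]
    (M : MDP X Y) (π π' : ℕ → X → Y → ℝ)
    (hπ : IsPolicy M π) (hπ' : IsPolicy M π')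
    (Rmax : ℝ) (hr : ∀ h ∈ Icc 1 M.H, ∀ x y, M.r h x y ∈ Set.Icc 0 Rmax)
    (τ : ℝ) (hτ : 0 < τ) (hp : 0 < coverage M π τ)
    (hagree : ∀ h ∈ Icc 1 M.H, ∀ x, x ∉ Gset M π τ h → ∀ y, π' h x y = π h x y)
    (hpos : ∀ h ∈ Icc 1 M.H, ∀ x ∈ Gset M π τ h, 0 ≤ ∑ y, π' h x y * Aval M π h x y)
    (Ahat : ℝ) (hAhat : Ahat ∈ Set.Icc 0 (2 * (M.H : ℝ) ^ 2 * Rmax)) :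
    coverage M π τ * Ahat * (2 * condAdvG M π π' τ - Ahat) / (4 * (M.H : ℝ) * Rmax)
      ≤ J M (mix (Ahat / (2 * (M.H : ℝ) ^ 2 * Rmax)) π π') - J M π := by
  obtain ⟨hA0, hA2⟩ := hAhat
  have hH0 : (0:ℝ) < (M.H:ℝ) := by exact_mod_cast M.H_pos
  have hHne : (M.H:ℝ) ≠ 0 := ne_of_gt hH0
  have h1H : 1 ∈ Icc 1 M.H := Finset.mem_Icc.mpr ⟨le_refl 1, M.H_pos⟩
  have hR0 : 0 ≤ Rmax := by
    have hx : Nonempty X := inferInstance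
    have hy : Nonempty Y := inferInstance
    obtain ⟨x⟩ := hx; obtain ⟨y⟩ := hy
    have := hr 1 h1H x y
    exact le_trans this.1 this.2
  rcases eq_or_lt_of_le hR0 with hReq | hR
  · -- degenerate case Rmax = 0
    have hA : Ahat = 0 := le_antisymm (by nlinarith) hA0
    have hz : Ahat / (2*(M.H:ℝ)^2*Rmax) = 0 := by rw [hA]; simp
    have hmix : J M (mix (Ahat / (2*(M.H:ℝ)^2*Rmax)) π π') = J M π := by
      rw [hz]
      unfold J
      exact Finset.sum_congr rfl fun x _ =>
        congrArg (M.μ x * ·) (Vval_congr M (mix 0 π π') π (fun h x y => by simp [mix]) 1 x)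
    rw [hmix, hA]
    simp
  · -- main case Rmax > 0
    set α := Ahat / (2 * (M.H:ℝ)^2 * Rmax) with hαdef
    have h2HR : (0:ℝ) < 2*(M.H:ℝ)^2*Rmax := by positivity
    have hα0 : 0 ≤ α := div_nonneg hA0 h2HR.le
    have hα1 : α ≤ 1 := by rw [hαdef, div_le_one h2HR]; exact hA2
    have hcov0 : coverage M π τ ≠ 0 := ne_of_gt hp
    have hmp : IsPolicy M (mix α π π') := mix_isPolicy M π π' hπ hπ' α hα0 hα1
    have hgz : ∀ h ∈ Icc 1 M.H, ∀ x, x ∉ Gset M π τ h →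
        ∑ y, π' h x y * Aval M π h x y = 0 := by
      intro h hh x hx
      have he : ∑ y, π' h x y * Aval M π h x y = ∑ y, π h x y * Aval M π h x y :=
        Finset.sum_congr rfl fun y _ => by rw [hagree h hh x hx y]
      rw [he, sum_pi_A M π hπ h (Finset.mem_Icc.mp hh).2 x]
    have hg0 : ∀ h ∈ Icc 1 M.H, ∀ x, 0 ≤ ∑ y, π' h x y * Aval M π h x y := by
      intro h hh x
      by_cases hx : x ∈ Gset M π τ h
      · exact hpos h hh x hx
      · rw [hgz h hh x hx]
    have hgle : ∀ h ∈ Icc 1 M.H, ∀ x,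
        ∑ y, π' h x y * Aval M π h x y ≤ (M.H:ℝ)*Rmax := by
      intro h hh x
      obtain ⟨hh1, hh2⟩ := Finset.mem_Icc.mp hh
      calc ∑ y, π' h x y * Aval M π h x y ≤ ∑ y, π' h x y * ((M.H:ℝ)*Rmax) :=
          Finset.sum_le_sum fun y _ => mul_le_mul_of_nonneg_left
            (Aval_le M π hπ Rmax hR0 hr h hh1 hh2 x y) (hπ'.1 _ _ _)
        _ = (M.H:ℝ)*Rmax := by rw [← Finset.sum_mul, hπ'.2, one_mul]
    set S := ∑ h ∈ Icc 1 M.H, ∑ x, dState M π h x * ∑ y, π' h x y * Aval M π h x y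
      with hSdef
    have hS0 : 0 ≤ S := Finset.sum_nonneg fun h hh => Finset.sum_nonneg fun x _ =>
      mul_nonneg (dState_nonneg M π hπ h x) (hg0 h hh x)
    have hSiteeq : ∀ h ∈ Icc 1 M.H,
        (∑ x, if x ∈ Gset M π τ h then
            dState M π h x * ∑ y, π' h x y * Aval M π h x y else 0)
        = ∑ x, dState M π h x * ∑ y, π' h x y * Aval M π h x y := by
      intro h hh
      refine Finset.sum_congr rfl fun x _ => ?_
      by_cases hx : x ∈ Gset M π τ h
      · rw [if_pos hx]
      · rw [if_neg hx, hgz h hh x hx, mul_zero]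
    have hSeq : S = (M.H:ℝ) * coverage M π τ * condAdvG M π π' τ := by
      rw [condAdvG, Finset.sum_congr rfl hSiteeq, ← hSdef]
      field_simp
      try ring
    have hsump : ∑ h ∈ Icc 1 M.H, pGh M π τ h = (M.H:ℝ) * coverage M π τ := by
      rw [coverage, ← mul_assoc, mul_inv_cancel₀ hHne, one_mul]
    have hSle : S ≤ (M.H:ℝ)*Rmax * ((M.H:ℝ) * coverage M π τ) := by
      rw [← hsump, Finset.mul_sum, hSdef]
      refine Finset.sum_le_sum fun h hh => ?_
      rw [pGh, Finset.mul_sum]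
      refine Finset.sum_le_sum fun x _ => ?_
      by_cases hx : x ∈ Gset M π τ h
      · rw [if_pos hx]
        calc dState M π h x * ∑ y, π' h x y * Aval M π h x y
            ≤ dState M π h x * ((M.H:ℝ)*Rmax) :=
              mul_le_mul_of_nonneg_left (hgle h hh x) (dState_nonneg M π hπ h x)
          _ = (M.H:ℝ)*Rmax * dState M π h x := mul_comm _ _
      · rw [if_neg hx, hgz h hh x hx, mul_zero, mul_zero]
    have hHp : (0:ℝ) < (M.H:ℝ) * coverage M π τ := mul_pos hH0 hp
    set Ag := condAdvG M π π' τ with hAgdef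
    have hAg_le : Ag ≤ (M.H:ℝ)*Rmax := by
      have h1 : (M.H:ℝ) * coverage M π τ * Ag
          ≤ (M.H:ℝ)*Rmax*((M.H:ℝ)*coverage M π τ) := by rw [← hSeq]; exact hSle
      nlinarith [hHp]
    have hAg0 : 0 ≤ Ag := by
      have h2 : 0 ≤ (M.H:ℝ) * coverage M π τ * Ag := by rw [← hSeq]; exact hS0
      nlinarith [hHp]
    have hpdl := pdl M π (mix α π π') hπ hmp
    have hJ : J M (mix α π π') - J M π
        = α * ∑ h ∈ Icc 1 M.H, ∑ x, dState M (mix α π π') h x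
            * ∑ y, π' h x y * Aval M π h x y := by
      rw [hpdl, Finset.mul_sum]
      refine Finset.sum_congr rfl fun h hh => ?_
      rw [Finset.mul_sum]
      refine Finset.sum_congr rfl fun x _ => ?_
      rw [sum_mix_A M π π' hπ α h (Finset.mem_Icc.mp hh).2 x]
      ring
    by_cases hcase : Ahat ≤ 2*(M.H:ℝ)*Rmax
    · have hbern : ∀ h ∈ Icc 1 M.H, 1 - (M.H:ℝ)*α ≤ (1-α)^(h-1) := by
        intro h hh
        obtain ⟨hh1, hh2⟩ := Finset.mem_Icc.mp hh
        have hb := one_add_mul_le_pow (a := -α) (by linarith) (h-1)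
        have hc' : h - 1 ≤ M.H := by omega
        have hc : ((h-1:ℕ):ℝ) ≤ (M.H:ℝ) := by exact_mod_cast hc'
        calc 1 - (M.H:ℝ)*α ≤ 1 - ((h-1:ℕ):ℝ)*α := by nlinarith
          _ = 1 + ((h-1:ℕ):ℝ)*(-α) := by ring
          _ ≤ (1 + -α)^(h-1) := hb
          _ = (1-α)^(h-1) := by rw [← sub_eq_add_neg]
      have hlow : α * ((1 - (M.H:ℝ)*α) * S) ≤ J M (mix α π π') - J M π := by
        rw [hJ]
        refine mul_le_mul_of_nonneg_left ?_ hα0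
        rw [hSdef, Finset.mul_sum]
        refine Finset.sum_le_sum fun h hh => ?_
        rw [Finset.mul_sum]
        refine Finset.sum_le_sum fun x _ => ?_
        have hgx := hg0 h hh x
        have hdom := dState_mix_ge M π π' hπ hπ' α hα0 hα1 h x
        have hbn := hbern h hh
        have hd0 := dState_nonneg M π hπ h x
        calc (1 - (M.H:ℝ)*α) * (dState M π h x * ∑ y, π' h x y * Aval M π h x y)
            ≤ (1-α)^(h-1) * (dState M π h x * ∑ y, π' h x y * Aval M π h x y) :=
              mul_le_mul_of_nonneg_right hbn (mul_nonneg hd0 hgx)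
          _ = ((1-α)^(h-1) * dState M π h x) * ∑ y, π' h x y * Aval M π h x y := by
              ring
          _ ≤ dState M (mix α π π') h x * ∑ y, π' h x y * Aval M π h x y :=
              mul_le_mul_of_nonneg_right hdom hgx
      have hAe : Ahat = α * (2*(M.H:ℝ)^2*Rmax) := by
        rw [hαdef]; field_simp
      have key : coverage M π τ * Ahat * (2 * Ag - Ahat) / (4*(M.H:ℝ)*Rmax)
          = α * ((1 - (M.H:ℝ)*α) * S)
            - coverage M π τ * α^2 * (M.H:ℝ)^2 * ((M.H:ℝ)*Rmax - Ag) := by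
        rw [hSeq, hAe]
        field_simp
        ring
      rw [key]
      have hcor : 0 ≤ coverage M π τ * α^2 * (M.H:ℝ)^2 * ((M.H:ℝ)*Rmax - Ag) := by
        have := hAg_le
        have h4 : (0:ℝ) ≤ coverage M π τ * α^2 * (M.H:ℝ)^2 :=
          mul_nonneg (mul_nonneg hp.le (sq_nonneg α)) (sq_nonneg _)
        nlinarith
      linarith [hlow]
    · push_neg at hcase
      have hJ0 : (0:ℝ) ≤ J M (mix α π π') - J M π := by
        rw [hJ]
        exact mul_nonneg hα0 (Finset.sum_nonneg fun h hh => Finset.sum_nonneg fun x _ =>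
          mul_nonneg (dState_nonneg M (mix α π π') hmp h x) (hg0 h hh x))
      have hnum : coverage M π τ * Ahat * (2 * Ag - Ahat) ≤ 0 := by
        apply mul_nonpos_of_nonneg_of_nonpos (mul_nonneg hp.le hA0)
        linarith [hAg_le, hcase]
      have hfin : coverage M π τ * Ahat * (2 * Ag - Ahat) / (4*(M.H:ℝ)*Rmax) ≤ 0 :=
        div_nonpos_of_nonpos_of_nonneg hnum (by positivity)
      linarith
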